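/- There exist ε₀ > 0 and C ≥ 0, depending only on h, such that for every ε with |ε| ≤ ε₀ and all 1-periodic, nonnegative, continuous functions φ₁, φ₂ : ℝ → ℝ with ∫₀¹ φ₁ = ∫₀¹ φ₂ = 1: the maps g_i := g_{ε,φ_i} (i = 1,2) are strictly increasing bijections of ℝ and sup_{x∈ℝ} |g₁^{-1}(x) − g₂^{-1}(x)| ≤ C·|ε|·sup_{x∈ℝ} |φ₁(x) − φ₂(x)|. -/

import Mathlib

/-!
Write `g_{ε,φ} = id + ε F_φ` with `F_φ(x) = ∫₀¹ h(x,y) φ(y) dy`. By periodicity `h` is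
bounded by some `M` and Lipschitz with some constant `L`, and averaging against a probability
density keeps both bounds, so `|F_φ| ≤ M` and `F_φ` is `L`-Lipschitz. Once `|ε| L ≤ 1/2`,
`g_{ε,φ}` is a bounded perturbation of the identity whose Lipschitz part has constant `≤ 1/2`,
hence a strictly increasing bijection. If `g₁ a = g₂ b` then
`a - b = ε (F₂ b - F₂ a) + ε (F₂ a - F₁ a)`, so `|a - b| ≤ |a - b| / 2 + |ε| M ‖φ₁ - φ₂‖_∞`.
-/

open MeasureTheory

/-- The coupled map `g_{ε,φ}(x) = x + ε ∫₀¹ h(x,y) φ(y) dy`. -/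
noncomputable def gmap (h : ℝ → ℝ → ℝ) (ε : ℝ) (φ : ℝ → ℝ) : ℝ → ℝ :=
  fun x => x + ε * ∫ y in (0:ℝ)..1, h x y * φ y

/-- `h` is 1-periodic in each variable. -/
def periodicH (h : ℝ → ℝ → ℝ) : Prop :=
  (∀ x y, h (x+1) y = h x y) ∧ (∀ x y, h x (y+1) = h x y)

open Function NNReal

theorem Function.Periodic.fderiv {E F : Type*} [NormedAddCommGroup E] [NormedSpace ℝ E]
    [NormedAddCommGroup F] [NormedSpace ℝ F] {f : E → F} {c : E} (hf : Periodic f c) :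
    Periodic (fderiv ℝ f) c := fun x => by
  rw [← fderiv_comp_add_right, show (fun y => f (y + c)) = f from funext hf]

theorem isBounded_range_of_periodic_prod {α : Type*} [PseudoMetricSpace α] {f : ℝ × ℝ → α}
    (hf : Continuous f) (h₁ : Periodic f (1, 0)) (h₂ : Periodic f (0, 1)) :
    Bornology.IsBounded (Set.range f) := by
  have hK : IsCompact (Set.Icc (0:ℝ) 1 ×ˢ Set.Icc (0:ℝ) 1) := isCompact_Icc.prod isCompact_Icc
  refine (hK.image hf).isBounded.subset ?_
  rintro _ ⟨⟨x, y⟩, rfl⟩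
  obtain ⟨x', hx', hx⟩ := Periodic.exists_mem_Ico₀ (f := fun x => f (x, y))
    (fun x => by simpa using h₁ (x, y)) one_pos x
  obtain ⟨y', hy', hy⟩ := Periodic.exists_mem_Ico₀ (f := fun y => f (x', y))
    (fun y => by simpa using h₂ (x', y)) one_pos y
  exact ⟨(x', y'), ⟨Set.Ico_subset_Icc_self hx', Set.Ico_subset_Icc_self hy'⟩,
    hy.symm.trans hx.symm⟩

theorem ContDiff.exists_lipschitzWith_of_periodic_prod {E : Type*} [NormedAddCommGroup E]
    [NormedSpace ℝ E] {f : ℝ × ℝ → E} (hf : ContDiff ℝ 1 f) (h₁ : Periodic f (1, 0))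
    (h₂ : Periodic f (0, 1)) : ∃ L, LipschitzWith L f := by
  obtain ⟨C, hC⟩ := isBounded_iff_forall_norm_le.1 <| isBounded_range_of_periodic_prod
    (hf.continuous_fderiv one_ne_zero) h₁.fderiv h₂.fderiv
  refine ⟨.mk (max C 0) (le_max_right _ _), lipschitzWith_of_nnnorm_fderiv_le
    (hf.differentiable one_ne_zero) fun p => ?_⟩
  rw [← NNReal.coe_le_coe]
  exact (hC _ ⟨p, rfl⟩).trans (le_max_left _ _)

namespace periodicH

variable {h : ℝ → ℝ → ℝ}

theorem periodic_uncurry_fst (hper : periodicH h) : Periodic (uncurry h) (1, 0) :=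
  fun p => show h (p.1 + 1) (p.2 + 0) = h p.1 p.2 by rw [add_zero, hper.1]

theorem periodic_uncurry_snd (hper : periodicH h) : Periodic (uncurry h) (0, 1) :=
  fun p => show h (p.1 + 0) (p.2 + 1) = h p.1 p.2 by rw [add_zero, hper.2]

theorem exists_abs_le (hper : periodicH h) (hc : Continuous (uncurry h)) :
    ∃ M, ∀ x y, |h x y| ≤ M := by
  obtain ⟨M, hM⟩ := isBounded_iff_forall_norm_le.1 <| isBounded_range_of_periodic_prod hc
    hper.periodic_uncurry_fst hper.periodic_uncurry_snd
  exact ⟨M, fun x y => hM _ ⟨(x, y), rfl⟩⟩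

theorem exists_lipschitzWith (hper : periodicH h) (hC1 : ContDiff ℝ 1 (uncurry h)) :
    ∃ L, LipschitzWith L (uncurry h) :=
  hC1.exists_lipschitzWith_of_periodic_prod hper.periodic_uncurry_fst hper.periodic_uncurry_snd

end periodicH

structure IsProbDensity (φ : ℝ → ℝ) : Prop where
  continuous : Continuous φ
  nonneg : ∀ y, 0 ≤ φ y
  integral_eq_one : ∫ y in (0:ℝ)..1, φ y = 1

theorem IsProbDensity.abs_integral_mul_le {φ f : ℝ → ℝ} (hφ : IsProbDensity φ)
    (hf : Continuous f) {B : ℝ} (hB : ∀ y, |f y| ≤ B) :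
    |∫ y in (0:ℝ)..1, f y * φ y| ≤ B := by
  calc |∫ y in (0:ℝ)..1, f y * φ y| ≤ ∫ y in (0:ℝ)..1, |f y * φ y| :=
        intervalIntegral.abs_integral_le_integral_abs zero_le_one
    _ ≤ ∫ y in (0:ℝ)..1, B * φ y := by
        refine intervalIntegral.integral_mono_on zero_le_one
          ((hf.mul hφ.continuous).abs.intervalIntegrable 0 1)
          ((continuous_const.mul hφ.continuous).intervalIntegrable 0 1) fun y _ => ?_
        rw [abs_mul, abs_of_nonneg (hφ.nonneg y)]
        exact mul_le_mul_of_nonneg_right (hB y) (hφ.nonneg y)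
    _ = B := by rw [intervalIntegral.integral_const_mul, hφ.integral_eq_one, mul_one]

noncomputable def meanField (h : ℝ → ℝ → ℝ) (φ : ℝ → ℝ) (x : ℝ) : ℝ :=
  ∫ y in (0:ℝ)..1, h x y * φ y

section meanField

variable {h : ℝ → ℝ → ℝ} {L : ℝ≥0} {M : ℝ} {φ φ₁ φ₂ : ℝ → ℝ}

theorem gmap_eq_add_mul_meanField (ε : ℝ) :
    gmap h ε φ = fun x => x + ε * meanField h φ x := rfl

theorem abs_meanField_le (hc : Continuous (uncurry h)) (hM : ∀ x y, |h x y| ≤ M)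
    (hφ : IsProbDensity φ) (x : ℝ) : |meanField h φ x| ≤ M :=
  hφ.abs_integral_mul_le (hc.comp (Continuous.prodMk_right x)) (hM x)

theorem lipschitzWith_meanField (hL : LipschitzWith L (uncurry h)) (hφ : IsProbDensity φ) :
    LipschitzWith L (meanField h φ) := by
  have hc : ∀ x, Continuous (h x) := fun x => hL.continuous.comp (Continuous.prodMk_right x)
  refine LipschitzWith.of_dist_le_mul fun x x' => ?_
  have hint : ∀ x, IntervalIntegrable (fun y => h x y * φ y) volume 0 1 := fun x =>
    ((hc x).mul hφ.continuous).intervalIntegrable 0 1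
  rw [Real.dist_eq, meanField, meanField, ← intervalIntegral.integral_sub (hint x) (hint x')]
  simp_rw [← sub_mul]
  refine hφ.abs_integral_mul_le ((hc x).sub (hc x')) fun y => ?_
  simpa [Real.dist_eq, Prod.dist_eq] using hL.dist_le_mul (x, y) (x', y)

theorem abs_meanField_sub_le (hc : Continuous (uncurry h)) (hM : ∀ x y, |h x y| ≤ M)
    (hφ₁ : IsProbDensity φ₁) (hφ₂ : IsProbDensity φ₂) {D : ℝ}
    (hD : ∀ y, |φ₁ y - φ₂ y| ≤ D) (x : ℝ) :
    |meanField h φ₁ x - meanField h φ₂ x| ≤ M * D := by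
  have hcx : Continuous (h x) := hc.comp (Continuous.prodMk_right x)
  have hint : ∀ ψ : ℝ → ℝ, Continuous ψ →
      IntervalIntegrable (fun y => h x y * ψ y) volume 0 1 := fun ψ hψ =>
    (hcx.mul hψ).intervalIntegrable 0 1
  rw [meanField, meanField, ← intervalIntegral.integral_sub (hint φ₁ hφ₁.continuous)
    (hint φ₂ hφ₂.continuous)]
  simp_rw [← mul_sub]
  simpa using intervalIntegral.norm_integral_le_of_norm_le_const (a := 0) (b := 1)
    (f := fun y => h x y * (φ₁ y - φ₂ y)) fun y _ => (abs_mul _ _).trans_le <|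
      mul_le_mul (hM x y) (hD y) (abs_nonneg _) ((abs_nonneg _).trans (hM x y))

end meanField

section PerturbationOfId

variable {u u₁ u₂ : ℝ → ℝ} {K : ℝ≥0}

theorem strictMono_add_of_lipschitzWith (hu : LipschitzWith K u) (hK : K < 1) :
    StrictMono fun x => x + u x := by
  intro a b hab
  have hlip : |u b - u a| ≤ K * (b - a) := by
    simpa [Real.dist_eq, abs_of_pos (sub_pos.2 hab)] using hu.dist_le_mul b a
  have hK' : (K : ℝ) < 1 := hK
  nlinarith [(abs_le.1 hlip).1]

theorem surjective_add_of_abs_le (hu : Continuous u) {B : ℝ} (hB : ∀ x, |u x| ≤ B) :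
    Surjective fun x => x + u x := by
  refine (continuous_id.add hu).surjective ?_ ?_
  · exact Filter.tendsto_atTop_mono (fun x => show x + -B ≤ x + u x by
      linarith [(abs_le.1 (hB x)).1])
      (Filter.tendsto_atTop_add_const_right _ (-B) Filter.tendsto_id)
  · exact Filter.tendsto_atBot_mono (fun x => show x + u x ≤ x + B by
      linarith [(abs_le.1 (hB x)).2])
      (Filter.tendsto_atBot_add_const_right _ B Filter.tendsto_id)

theorem one_sub_mul_abs_invFun_sub_le (hu₂ : LipschitzWith K u₂)
    (hs₁ : Surjective fun x => x + u₁ x) (hs₂ : Surjective fun x => x + u₂ x) {δ : ℝ}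
    (hδ : ∀ x, |u₁ x - u₂ x| ≤ δ) (y : ℝ) :
    (1 - K) * |invFun (fun x => x + u₁ x) y - invFun (fun x => x + u₂ x) y| ≤ δ := by
  set a := invFun (fun x => x + u₁ x) y
  set b := invFun (fun x => x + u₂ x) y
  have ha : a + u₁ a = y := rightInverse_invFun hs₁ y
  have hb : b + u₂ b = y := rightInverse_invFun hs₂ y
  have hlip : |u₂ a - u₂ b| ≤ K * |a - b| := by
    simpa [Real.dist_eq] using hu₂.dist_le_mul a b
  have hab : |a - b| ≤ δ + K * |a - b| := by
    rw [abs_le] at hlip ⊢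
    constructor <;> linarith [abs_le.1 (hδ a)]
  linarith

end PerturbationOfId

section gmap

variable {h : ℝ → ℝ → ℝ} {L : ℝ≥0} {M ε : ℝ} {φ φ₁ φ₂ : ℝ → ℝ}

theorem lipschitzWith_mul_meanField (hL : LipschitzWith L (uncurry h)) (hφ : IsProbDensity φ) :
    LipschitzWith (‖ε‖₊ * L) fun x => ε * meanField h φ x :=
  (lipschitzWith_smul ε).comp (lipschitzWith_meanField hL hφ)

theorem strictMono_gmap (hL : LipschitzWith L (uncurry h)) (hφ : IsProbDensity φ)
    (hεL : ‖ε‖₊ * L < 1) : StrictMono (gmap h ε φ) :=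
  strictMono_add_of_lipschitzWith (lipschitzWith_mul_meanField hL hφ) hεL

theorem surjective_gmap (hL : LipschitzWith L (uncurry h)) (hM : ∀ x y, |h x y| ≤ M)
    (hφ : IsProbDensity φ) : Surjective (gmap h ε φ) := by
  rw [gmap_eq_add_mul_meanField]
  refine surjective_add_of_abs_le (lipschitzWith_mul_meanField hL hφ).continuous
    (B := |ε| * M) fun x => ?_
  rw [abs_mul]
  exact mul_le_mul_of_nonneg_left (abs_meanField_le hL.continuous hM hφ x) (abs_nonneg ε)

theorem bijective_gmap (hL : LipschitzWith L (uncurry h)) (hM : ∀ x y, |h x y| ≤ M)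
    (hφ : IsProbDensity φ) (hεL : ‖ε‖₊ * L < 1) : Bijective (gmap h ε φ) :=
  ⟨(strictMono_gmap hL hφ hεL).injective, surjective_gmap hL hM hφ⟩

theorem abs_invFun_gmap_sub_le (hL : LipschitzWith L (uncurry h)) (hM : ∀ x y, |h x y| ≤ M)
    (hφ₁ : IsProbDensity φ₁) (hφ₂ : IsProbDensity φ₂) (hεL : ‖ε‖₊ * L ≤ 1 / 2) {D : ℝ}
    (hD : ∀ y, |φ₁ y - φ₂ y| ≤ D) (x : ℝ) :
    |invFun (gmap h ε φ₁) x - invFun (gmap h ε φ₂) x| ≤ 2 * M * |ε| * D := by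
  have hinv := one_sub_mul_abs_invFun_sub_le (u₁ := fun x => ε * meanField h φ₁ x)
    (lipschitzWith_mul_meanField hL hφ₂) (surjective_gmap hL hM hφ₁)
    (surjective_gmap hL hM hφ₂) (δ := |ε| * (M * D)) (fun x => by
      rw [← mul_sub, abs_mul]
      exact mul_le_mul_of_nonneg_left (abs_meanField_sub_le hL.continuous hM hφ₁ hφ₂ hD x)
        (abs_nonneg ε)) x
  rw [← gmap_eq_add_mul_meanField, ← gmap_eq_add_mul_meanField] at hinv
  have hεL' : ((‖ε‖₊ * L : ℝ≥0) : ℝ) ≤ 1 / 2 := by exact_mod_cast hεL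
  nlinarith [mul_le_mul_of_nonneg_right hεL' (abs_nonneg
    (invFun (gmap h ε φ₁) x - invFun (gmap h ε φ₂) x))]

end gmap

/-- The inverses of the coupled maps associated to two densities are uniformly
`C|ε|`-close in terms of the uniform distance of the densities. -/
theorem stmt11 (h : ℝ → ℝ → ℝ) (hC1 : ContDiff ℝ 1 (Function.uncurry h))
    (hper : periodicH h) :
    ∃ ε₀ > (0:ℝ), ∃ C ≥ (0:ℝ), ∀ ε : ℝ, |ε| ≤ ε₀ →
      ∀ φ₁ φ₂ : ℝ → ℝ,
        (∀ x, φ₁ (x+1) = φ₁ x) → (∀ x, 0 ≤ φ₁ x) → Continuous φ₁ →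
        (∫ x in (0:ℝ)..1, φ₁ x) = 1 →
        (∀ x, φ₂ (x+1) = φ₂ x) → (∀ x, 0 ≤ φ₂ x) → Continuous φ₂ →
        (∫ x in (0:ℝ)..1, φ₂ x) = 1 →
        (StrictMono (gmap h ε φ₁) ∧ Function.Bijective (gmap h ε φ₁)) ∧
        (StrictMono (gmap h ε φ₂) ∧ Function.Bijective (gmap h ε φ₂)) ∧
        (⨆ x : ℝ, |Function.invFun (gmap h ε φ₁) x - Function.invFun (gmap h ε φ₂) x|)
          ≤ C * |ε| * ⨆ x : ℝ, |φ₁ x - φ₂ x| := by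
  obtain ⟨M, hM⟩ := hper.exists_abs_le hC1.continuous
  obtain ⟨L, hL⟩ := hper.exists_lipschitzWith hC1
  have hM0 : 0 ≤ M := (abs_nonneg _).trans (hM 0 0)
  refine ⟨(2 * (L + 1))⁻¹, by positivity, 2 * M, by positivity,
    fun ε hε φ₁ φ₂ hp₁ hn₁ hc₁ hi₁ hp₂ hn₂ hc₂ hi₂ => ?_⟩
  have hφ₁ : IsProbDensity φ₁ := ⟨hc₁, hn₁, hi₁⟩
  have hφ₂ : IsProbDensity φ₂ := ⟨hc₂, hn₂, hi₂⟩
  have hεL : ‖ε‖₊ * L ≤ 1 / 2 := by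
    have hε' : |ε| * (2 * (L + 1)) ≤ 1 := by rwa [← le_div_iff₀ (by positivity), one_div]
    rw [← NNReal.coe_le_coe]
    push_cast [Real.norm_eq_abs]
    nlinarith [abs_nonneg ε]
  have hεL' : ‖ε‖₊ * L < 1 := hεL.trans_lt (by norm_num)
  have hbdd : BddAbove (Set.range fun y => |φ₁ y - φ₂ y|) :=
    (Periodic.isBounded_of_continuous (f := fun y => |φ₁ y - φ₂ y|)
      (fun y => by simp only [hp₁, hp₂]) one_ne_zero
      (hc₁.sub hc₂).abs).bddAbove
  refine ⟨⟨strictMono_gmap hL hφ₁ hεL', bijective_gmap hL hM hφ₁ hεL'⟩,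
    ⟨strictMono_gmap hL hφ₂ hεL', bijective_gmap hL hM hφ₂ hεL'⟩, ?_⟩
  exact Real.iSup_le (abs_invFun_gmap_sub_le hL hM hφ₁ hφ₂ hεL (le_ciSup hbdd))
    (mul_nonneg (by positivity) (Real.iSup_nonneg fun _ => abs_nonneg _))
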